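/- Let α > 0 and 0 < γ < 1, and let F be a family of subsets of ℕ (nonempty, upward hereditary) such that g_{α,γ}[B] ∈ F whenever B ∈ F. If A ⊆ ℕ is an essential F-set, i.e. A belongs to some idempotent ultrafilter p on ℕ all of whose members lie in F, then g_{α,γ}[A] = {⌊αn + γ⌋ : n ∈ A} is an essential F-set: there is an idempotent ultrafilter q on ℕ all of whose members lie in F with g_{α,γ}[A] ∈ q. -/
import Mathlib


/-- The nonhomogeneous spectrum map `g_{α,γ}(n) = ⌊α n + γ⌋`. -/
noncomputable def spectrumMap (α γ : ℝ) (n : ℕ) : ℕ := ⌊α * n + γ⌋₊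

/-- The ultrafilter sum: `A ∈ usum p q ↔ {x : {y : x + y ∈ A} ∈ q} ∈ p`. -/
def usum (p q : Ultrafilter ℕ) : Ultrafilter ℕ :=
  p.bind fun x => q.map fun y => x + y

lemma mem_usum {p q : Ultrafilter ℕ} {s : Set ℕ} :
    s ∈ usum p q ↔ {x | {y | x + y ∈ s} ∈ q} ∈ p := Iff.rfl

/-- If a real number is within `ε` of an integer, its fractional part is near `0` or `1`. -/
lemma fract_near {x ε : ℝ} {m : ℤ} (h : |x - m| < ε) :
    Int.fract x < ε ∨ 1 - ε < Int.fract x := by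
  have habs := abs_lt.mp h
  rcases le_or_gt (m : ℝ) x with h1 | h1
  · left
    have hm : (m : ℝ) ≤ ⌊x⌋ := by exact_mod_cast Int.le_floor.mpr (by exact_mod_cast h1)
    have := Int.fract_nonneg x
    unfold Int.fract
    linarith
  · right
    have hm : ⌊x⌋ < m := Int.floor_lt.mpr (by exact_mod_cast h1)
    have hm2 : ⌊x⌋ + 1 ≤ m := hm
    have hm' : (⌊x⌋ : ℝ) + 1 ≤ (m : ℝ) := by exact_mod_cast hm2
    unfold Int.fract
    linarith

/-- Additivity of the spectrum map on points whose `α`-multiple has fractional part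
 near `0` (both) or near `1` (both). -/
lemma spectrum_add {α γ : ℝ} (hα : 0 < α) (hγ0 : 0 < γ) (hγ1 : γ < 1)
    {ε : ℝ} (hε2 : 2 * ε ≤ min γ (1 - γ)) (m n : ℕ)
    (hcase : (Int.fract (α * m) < ε ∧ Int.fract (α * n) < ε) ∨
             (1 - ε < Int.fract (α * m) ∧ 1 - ε < Int.fract (α * n))) :
    spectrumMap α γ (m + n) = spectrumMap α γ m + spectrumMap α γ n := by
  have hεγ : 2 * ε ≤ γ := le_trans hε2 (min_le_left _ _)
  have hεγ' : 2 * ε ≤ 1 - γ := le_trans hε2 (min_le_right _ _)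
  set x := α * (m : ℝ) with hxdef
  set y := α * (n : ℝ) with hydef
  have hxy : α * ((m + n : ℕ) : ℝ) = x + y := by push_cast; ring
  have hx0 : 0 ≤ x := mul_nonneg hα.le (Nat.cast_nonneg m)
  have hy0 : 0 ≤ y := mul_nonneg hα.le (Nat.cast_nonneg n)
  have hfx := Int.fract_nonneg x
  have hfx1 := Int.fract_lt_one x
  have hfy := Int.fract_nonneg y
  have hfy1 := Int.fract_lt_one y
  have hex : (⌊x⌋ : ℝ) + Int.fract x = x := Int.floor_add_fract x
  have hey : (⌊y⌋ : ℝ) + Int.fract y = y := Int.floor_add_fract y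
  -- the key integer floor identity
  have hZ : ⌊x + y + γ⌋ = ⌊x + γ⌋ + ⌊y + γ⌋ := by
    rcases hcase with ⟨hm, hn⟩ | ⟨hm, hn⟩
    · have hεpos : 0 ≤ ε := le_trans hfx hm.le
      have e1 : ⌊x + γ⌋ = ⌊x⌋ := by
        rw [Int.floor_eq_iff]
        constructor
        · linarith
        · push_cast; linarith
      have e2 : ⌊y + γ⌋ = ⌊y⌋ := by
        rw [Int.floor_eq_iff]
        constructor
        · linarith
        · push_cast; linarith
      have e3 : ⌊x + y + γ⌋ = ⌊x⌋ + ⌊y⌋ := by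
        rw [Int.floor_eq_iff]
        constructor
        · push_cast; linarith
        · push_cast; linarith
      rw [e1, e2, e3]
    · have hεpos : 0 ≤ ε := by nlinarith
      have e1 : ⌊x + γ⌋ = ⌊x⌋ + 1 := by
        rw [Int.floor_eq_iff]
        constructor
        · push_cast; linarith
        · push_cast; linarith
      have e2 : ⌊y + γ⌋ = ⌊y⌋ + 1 := by
        rw [Int.floor_eq_iff]
        constructor
        · push_cast; linarith
        · push_cast; linarith
      have e3 : ⌊x + y + γ⌋ = ⌊x⌋ + ⌊y⌋ + 2 := by
        rw [Int.floor_eq_iff]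
        constructor
        · push_cast; linarith
        · push_cast; linarith
      rw [e1, e2, e3]; ring
  -- transfer to natural floors
  unfold spectrumMap
  rw [hxy]
  have h1 : (0:ℝ) ≤ x + γ := by linarith
  have h2 : (0:ℝ) ≤ y + γ := by linarith
  have h3 : (0:ℝ) ≤ x + y + γ := by linarith
  have : ((⌊x + y + γ⌋₊ : ℤ)) = ((⌊x + γ⌋₊ + ⌊y + γ⌋₊ : ℕ) : ℤ) := by
    push_cast
    rw [Int.natCast_floor_eq_floor h1, Int.natCast_floor_eq_floor h2,
      Int.natCast_floor_eq_floor h3]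
    exact hZ
  exact_mod_cast this

/-- Membership in an ultrafilter is determined on a member set. -/
lemma mem_iff_of_eqOn {p : Ultrafilter ℕ} {B s t : Set ℕ} (hB : B ∈ p)
    (h : ∀ x ∈ B, x ∈ s ↔ x ∈ t) : s ∈ p ↔ t ∈ p := by
  constructor
  · intro hs
    exact Filter.mem_of_superset (Filter.inter_mem hs hB) fun x hx => (h x hx.2).mp hx.1
  · intro ht
    exact Filter.mem_of_superset (Filter.inter_mem ht hB) fun x hx => (h x hx.2).mpr hx.1

theorem spectra_of_essential_F_sets (α γ : ℝ) (hα : 0 < α) (hγ0 : 0 < γ) (hγ1 : γ < 1)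
    (F : Set (Set ℕ)) (hFne : F.Nonempty)
    (hFmem : ∀ A ∈ F, A.Nonempty)
    (hFup : ∀ A B : Set ℕ, A ∈ F → A ⊆ B → B ∈ F)
    (hFimg : ∀ B ∈ F, spectrumMap α γ '' B ∈ F)
    (A : Set ℕ)
    (hA : ∃ p : Ultrafilter ℕ, usum p p = p ∧ (∀ B ∈ p, B ∈ F) ∧ A ∈ p) :
    ∃ q : Ultrafilter ℕ, usum q q = q ∧ (∀ B ∈ q, B ∈ F) ∧ spectrumMap α γ '' A ∈ q := by
  classical
  obtain ⟨p, hpp, hpF, hAp⟩ := hA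
  haveI : Fact ((0:ℝ) < 1) := ⟨one_pos⟩
  set g : ℕ → ℕ := spectrumMap α γ with hg
  set φ : ℕ → AddCircle (1:ℝ) := fun n => ((α * n : ℝ) : AddCircle (1:ℝ)) with hφ
  have hφadd : ∀ a b : ℕ, φ (a + b) = φ a + φ b := by
    intro a b
    show ((α * ((a:ℕ) + (b:ℕ) : ℕ) : ℝ) : AddCircle (1:ℝ)) = _
    have : α * (((a + b : ℕ) : ℕ) : ℝ) = α * a + α * b := by push_cast; ring
    rw [this]
    rfl
  -- ultrafilter limit of φ along p
  obtain ⟨u, -, hu⟩ := isCompact_univ.ultrafilter_le_nhds (p.map φ) (by simp)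
  have hu' : Filter.Tendsto φ ↑p (nhds u) := hu
  -- p-lim is idempotent in the circle
  have key : Filter.Tendsto φ ↑(usum p p) (nhds (u + u)) := by
    intro U hU
    have hc : Filter.Tendsto (fun z : AddCircle (1:ℝ) × AddCircle (1:ℝ) => z.1 + z.2)
        (nhds (u, u)) (nhds (u + u)) := continuous_add.tendsto (u, u)
    rw [nhds_prod_eq] at hc
    obtain ⟨V, hV, W, hW, hVW⟩ := Filter.mem_prod_iff.mp (hc hU)
    have h1 : φ ⁻¹' V ∈ p := hu' hV
    have h2 : φ ⁻¹' W ∈ p := hu' hW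
    rw [Filter.mem_map, Ultrafilter.mem_coe, mem_usum]
    refine Filter.mem_of_superset h1 fun a ha => ?_
    refine Filter.mem_of_superset h2 fun b hb => ?_
    show φ (a + b) ∈ U
    rw [hφadd]
    exact hVW (Set.mk_mem_prod ha hb)
  rw [hpp] at key
  have huu : u + u = u := tendsto_nhds_unique key hu'
  have hu0 : u = 0 := by
    have h' : u + u = 0 + u := by rw [zero_add]; exact huu
    exact add_right_cancel h'
  -- extract a member of p on which fract (α n) is near 0 or 1
  set ε : ℝ := min γ (1 - γ) / 3 with hεdef
  have hεpos : 0 < ε := by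
    have : 0 < min γ (1 - γ) := lt_min hγ0 (by linarith)
    positivity
  have hε2 : 2 * ε ≤ min γ (1 - γ) := by
    have : 0 < min γ (1 - γ) := lt_min hγ0 (by linarith)
    rw [hεdef]; linarith
  have hS : φ ⁻¹' (Metric.ball (0 : AddCircle (1:ℝ)) ε) ∈ p := by
    apply hu'
    rw [hu0]
    exact Metric.ball_mem_nhds 0 hεpos
  set P : Set ℕ := {n | Int.fract (α * n) < ε} with hP
  set N : Set ℕ := {n | 1 - ε < Int.fract (α * n)} with hN
  have hPN : P ∪ N ∈ p := by
    refine Filter.mem_of_superset hS fun n hn => ?_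
    have hball : ‖φ n‖ < ε := by
      have := Metric.mem_ball.mp hn
      rwa [dist_zero_right] at this
    have hnorm : ‖φ n‖ = |α * n - round ((1:ℝ)⁻¹ * (α * n)) * 1| := AddCircle.norm_eq 1
    rw [hnorm] at hball
    have hball' : |α * n - (round (α * n) : ℝ)| < ε := by
      rwa [inv_one, one_mul, mul_one] at hball
    rcases fract_near hball' with h | h
    · exact Or.inl h
    · exact Or.inr h
  -- the member set of p on which g is additive
  have hB : ∃ B ∈ p, ∀ a ∈ B, ∀ b ∈ B, g (a + b) = g a + g b := by
    rcases (Ultrafilter.union_mem_iff.mp hPN) with h | h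
    · exact ⟨P, h, fun a ha b hb =>
        spectrum_add hα hγ0 hγ1 hε2 a b (Or.inl ⟨ha, hb⟩)⟩
    · exact ⟨N, h, fun a ha b hb =>
        spectrum_add hα hγ0 hγ1 hε2 a b (Or.inr ⟨ha, hb⟩)⟩
  obtain ⟨B, hBp, hadd⟩ := hB
  -- the witness ultrafilter
  refine ⟨p.map g, ?_, ?_, ?_⟩
  · -- idempotency
    refine Ultrafilter.ext fun C => ?_
    have e1 : C ∈ usum (p.map g) (p.map g) ↔ {a | {b | g a + g b ∈ C} ∈ p} ∈ p := by
      rw [mem_usum, Ultrafilter.mem_map]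
      have : g ⁻¹' {a | {b | a + b ∈ C} ∈ p.map g} = {a | {b | g a + g b ∈ C} ∈ p} := by
        ext a
        simp only [Set.mem_preimage, Set.mem_setOf_eq, Ultrafilter.mem_map,
          Set.preimage_setOf_eq]
      rw [this]
    have e2 : C ∈ p.map g ↔ {a | {b | g (a + b) ∈ C} ∈ p} ∈ p := by
      rw [Ultrafilter.mem_map]
      conv_lhs => rw [← hpp]
      rw [mem_usum]
      have : {x | {y | x + y ∈ g ⁻¹' C} ∈ p} = {a | {b | g (a + b) ∈ C} ∈ p} := rfl
      rw [this]
    rw [e1, e2]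
    refine mem_iff_of_eqOn hBp fun a ha => ?_
    simp only [Set.mem_setOf_eq]
    refine mem_iff_of_eqOn hBp fun b hb => ?_
    simp only [Set.mem_setOf_eq]
    rw [hadd a ha b hb]
  · -- members lie in F
    intro C hC
    have h1 : g ⁻¹' C ∈ p := hC
    have h2 : g ⁻¹' C ∈ F := hpF _ h1
    have h3 : g '' (g ⁻¹' C) ∈ F := hFimg _ h2
    exact hFup _ _ h3 (Set.image_preimage_subset g C)
  · -- the image of A is a member
    rw [Ultrafilter.mem_map]
    exact Filter.mem_of_superset hAp (Set.subset_preimage_image g A)
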